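/- arXiv:2602.16734 — 2 statements merged into one kernel-verified Lean document; each statement's English description precedes it below -/
import Mathlib

section
/- With single-peaked preferences and Bloc voting selecting k winners: if C_i is a non-winning candidate with i ≤ k and there exists a winning candidate C_j with j ≥ i+k, then fewer than N/2 voters prefer C_i to C_{i+k}; consequently C_i cannot majority-defeat any of C_{i+1}, ..., C_{i+k}, and neither can any candidate to the left of C_i. -/
open Finset

/-- Each voter's preference is a strict total (linear) order on the candidates. -/
def StrictPrefs {m N : ℕ} (P : Fin N → Fin m → Fin m → Prop) : Prop :=
  ∀ v : Fin N, IsStrictTotalOrder (Fin m) (P v)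

/-- Single-peakedness w.r.t. the left-right order on `Fin m`: for `i < j < k`,
no voter ranks both `C_i` and `C_k` above `C_j`. -/
def SinglePeaked {m N : ℕ} (P : Fin N → Fin m → Fin m → Prop) : Prop :=
  ∀ (v : Fin N) (i j k : Fin m), i < j → j < k → ¬ (P v i j ∧ P v k j)

/-- Number of voters preferring `a` to `b`. -/
def prefCount {m N : ℕ} (P : Fin N → Fin m → Fin m → Prop)
    [∀ v a b, Decidable (P v a b)] (a b : Fin m) : ℕ :=
  (univ.filter fun v => P v a b).card

/-- `a` majority-defeats `b`: strictly more than `N/2` voters prefer `a` to `b`. -/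
def Defeats {m N : ℕ} (P : Fin N → Fin m → Fin m → Prop)
    [∀ v a b, Decidable (P v a b)] (a b : Fin m) : Prop :=
  2 * prefCount P a b > N

instance {m N : ℕ} (P : Fin N → Fin m → Fin m → Prop)
    [∀ v a b, Decidable (P v a b)] (a b : Fin m) : Decidable (Defeats P a b) :=
  inferInstanceAs (Decidable (2 * prefCount P a b > N))

/-- Voter `v` approves candidate `a` under Bloc voting with `k` winners:
`a` is among `v`'s top `k` candidates. -/
def Approves {m N : ℕ} (P : Fin N → Fin m → Fin m → Prop)
    [∀ v a b, Decidable (P v a b)] (k : ℕ) (v : Fin N) (a : Fin m) : Prop :=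
  (univ.filter fun b => P v b a).card < k

instance {m N : ℕ} (P : Fin N → Fin m → Fin m → Prop)
    [∀ v a b, Decidable (P v a b)] (k : ℕ) (v : Fin N) (a : Fin m) :
    Decidable (Approves P k v a) :=
  inferInstanceAs (Decidable ((univ.filter fun b => P v b a).card < k))

/-- Bloc score of candidate `a`: the number of voters who approve `a`. -/
def blocScore {m N : ℕ} (P : Fin N → Fin m → Fin m → Prop)
    [∀ v a b, Decidable (P v a b)] (k : ℕ) (a : Fin m) : ℕ :=
  (univ.filter fun v => Approves P k v a).card

/-- `W` is a winning set under Bloc voting with `k` winners (strict vote totals):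
`W` has `k` members and each member has strictly more approvals than each non-member. -/
def IsWinningSet {m N : ℕ} (P : Fin N → Fin m → Fin m → Prop)
    [∀ v a b, Decidable (P v a b)] (k : ℕ) (W : Finset (Fin m)) : Prop :=
  W.card = k ∧ ∀ w ∈ W, ∀ c ∉ W, blocScore P k w > blocScore P k c

/-!
A voter preferring `C_i` to `C_{i+k}` ranks above `C_i` only candidates from one side of it:
some of the `i` candidates to its left, or some of the `k - 1` strictly between `C_i` and
`C_{i+k}`; either way fewer than `k`, so he approves `C_i`. A voter approving `C_j`, `j ≥ i + k`,
cannot prefer `C_i` to `C_j`, as then all `j - i ≥ k` candidates of `[C_i, C_j)` would beat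
`C_j`; by single-peakedness he prefers `C_{i+k}` to `C_i`. Hence
`|S_{i,i+k}| ≤ |S_i| < |S_j| ≤ |S_{i+k,i}| = N - |S_{i,i+k}|`.
-/

section SinglePeakedRel

variable {α : Type*} {r : α → α → Prop}

def SinglePeakedRel [LT α] (r : α → α → Prop) : Prop :=
  ∀ a b c, a < b → b < c → ¬ (r a b ∧ r c b)

theorem rel_of_not_rel_of_ne [Std.Trichotomous r] {a b : α} (hab : a ≠ b) (h : ¬ r a b) :
    r b a :=
  ((trichotomous_of r a b).resolve_left h).resolve_left hab

variable [IsStrictTotalOrder α r] [LinearOrder α]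

theorem prefers_farther_right (hsp : SinglePeakedRel r)
    {a b c : α} (hab : a < b) (hbc : b ≤ c) (h : r a b) : r a c := by
  rcases hbc.eq_or_lt with rfl | hbc
  · exact h
  · exact trans_trichotomous_right h fun hcb => hsp a b c hab hbc ⟨h, hcb⟩

theorem prefers_closer_left (hsp : SinglePeakedRel r)
    {a' a b : α} (ha : a' ≤ a) (hab : a < b) (h : r a' b) : r a b := by
  rcases ha.eq_or_lt with rfl | ha
  · exact h
  · by_contra hn
    have hba := rel_of_not_rel_of_ne hab.ne hn
    exact hsp a' a b ha hab ⟨trans_of r h hba, hba⟩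

theorem prefers_closer_right (hsp : SinglePeakedRel r)
    {a b c : α} (hab : a < b) (hbc : b ≤ c) (h : r c a) : r b a := by
  rcases hbc.eq_or_lt with rfl | hbc
  · exact h
  · by_contra hn
    have hab' := rel_of_not_rel_of_ne hab.ne' hn
    exact hsp a b c hab hbc ⟨hab', trans_of r h hab'⟩

end SinglePeakedRel

section Counting

variable {m : ℕ} {r : Fin m → Fin m → Prop} [DecidableRel r] [IsStrictTotalOrder (Fin m) r]

theorem card_filter_prefers_lt (hsp : SinglePeakedRel r)
    {a c : Fin m} {k : ℕ} (hac : a < c) (h : r a c) (ha : (a : ℕ) < k)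
    (hc : (c : ℕ) ≤ a + k) : #{b | r b a} < k := by
  by_cases hright : ∃ b, a < b ∧ r b a
  · obtain ⟨b₀, hab₀, hb₀⟩ := hright
    have hsub : ({b | r b a} : Finset (Fin m)) ⊆ Ioo a c := by
      intro b hb
      replace hb := (mem_filter.1 hb).2
      refine mem_Ioo.2 ⟨?_, ?_⟩
      · rcases lt_trichotomy b a with hba | rfl | hab
        · exact absurd ⟨hb, hb₀⟩ (hsp b a b₀ hba hab₀)
        · exact absurd hb (irrefl_of r b)
        · exact hab
      · by_contra! hcb
        exact asymm_of r h (prefers_closer_right hsp hac hcb hb)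
    have := card_le_card hsub
    rw [Fin.card_Ioo] at this
    omega
  · push Not at hright
    have hsub : ({b | r b a} : Finset (Fin m)) ⊆ Iio a := by
      intro b hb
      replace hb := (mem_filter.1 hb).2
      rcases lt_trichotomy b a with hba | rfl | hab
      · exact mem_Iio.2 hba
      · exact absurd hb (irrefl_of r b)
      · exact absurd hb (hright b hab)
    have := card_le_card hsub
    rw [Fin.card_Iio] at this
    omega

theorem card_Ico_le_card_filter_prefers (hsp : SinglePeakedRel r)
    {a c : Fin m} (h : r a c) : (c : ℕ) - a ≤ #{b | r b c} := by
  rw [← Fin.card_Ico]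
  refine card_le_card fun b hb => mem_filter.2 ⟨mem_univ b, ?_⟩
  obtain ⟨hab, hbc⟩ := mem_Ico.1 hb
  exact prefers_closer_left hsp hab hbc h

theorem prefers_of_card_filter_prefers_lt (hsp : SinglePeakedRel r)
    {a c : Fin m} {k : ℕ} (hc : #{b | r b c} < k) (hac : (a : ℕ) + k ≤ c) : r c a := by
  by_contra hn
  rcases eq_or_ne a c with rfl | hne
  · omega
  · have := card_Ico_le_card_filter_prefers hsp (rel_of_not_rel_of_ne hne.symm hn)
    omega

end Counting

section Voting

variable {m N : ℕ} {P : Fin N → Fin m → Fin m → Prop} [∀ v a b, Decidable (P v a b)]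

theorem prefCount_add_prefCount_swap (hP : StrictPrefs P) {a b : Fin m} (hab : a ≠ b) :
    prefCount P a b + prefCount P b a = N := by
  have hswap : (univ.filter fun v => P v b a) = univ.filter fun v => ¬ P v a b :=
    filter_congr fun v _ =>
      haveI := hP v
      ⟨asymm_of (P v), rel_of_not_rel_of_ne hab⟩
  rw [prefCount, prefCount, hswap, card_filter_add_card_filter_not, card_univ, Fintype.card_fin]

theorem prefCount_le_blocScore (hP : StrictPrefs P) (hSP : SinglePeaked P) {k : ℕ}
    {a c : Fin m} (hac : a < c) (ha : (a : ℕ) < k) (hc : (c : ℕ) ≤ a + k) :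
    prefCount P a c ≤ blocScore P k a :=
  card_le_card <| monotone_filter_right _ fun v _ h =>
    haveI := hP v
    card_filter_prefers_lt (hSP v) hac h ha hc

theorem blocScore_le_prefCount (hP : StrictPrefs P) (hSP : SinglePeaked P) {k : ℕ}
    {a b c : Fin m} (hab : a < b) (hbc : b ≤ c) (hac : (a : ℕ) + k ≤ c) :
    blocScore P k c ≤ prefCount P b a :=
  card_le_card <| monotone_filter_right _ fun v _ h =>
    haveI := hP v
    prefers_closer_right (hSP v) hab hbc (prefers_of_card_filter_prefers_lt (hSP v) h hac)

theorem prefCount_le_prefCount (hP : StrictPrefs P) (hSP : SinglePeaked P)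
    {a' a b c : Fin m} (ha : a' ≤ a) (hab : a < b) (hbc : b ≤ c) :
    prefCount P a' b ≤ prefCount P a c :=
  card_le_card <| monotone_filter_right _ fun v _ h =>
    haveI := hP v
    prefers_farther_right (hSP v) hab hbc (prefers_closer_left (hSP v) ha hab h)

end Voting

theorem nonwinner_cannot_defeat_right_general {m N : ℕ}
    (P : Fin N → Fin m → Fin m → Prop) [∀ v a b, Decidable (P v a b)]
    (hP : StrictPrefs P) (hSP : SinglePeaked P)
    (k : ℕ) (W : Finset (Fin m)) (hW : IsWinningSet P k W)
    (i j : Fin m) (hi : i ∉ W) (hik : (i : ℕ) < k)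
    (hj : j ∈ W) (hge : (i : ℕ) + k ≤ (j : ℕ)) :
    (∀ t : Fin m, (t : ℕ) = (i : ℕ) + k → 2 * prefCount P i t < N) ∧
    (∀ i' : Fin m, i' ≤ i →
      ∀ l : Fin m, i < l → (l : ℕ) ≤ (i : ℕ) + k → ¬ Defeats P i' l) := by
  set t : Fin m := ⟨i + k, hge.trans_lt j.isLt⟩
  have hit : i < t := Fin.lt_def.2 (by simp only [t]; omega)
  have htj : t ≤ j := Fin.le_def.2 hge
  have hmajority : 2 * prefCount P i t < N := by
    have h₁ := prefCount_le_blocScore hP hSP hit hik le_rfl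
    have h₂ := hW.2 j hj i hi
    have h₃ := blocScore_le_prefCount hP hSP hit htj hge
    have h₄ := prefCount_add_prefCount_swap hP hit.ne
    omega
  refine ⟨fun t' ht' => (Fin.ext ht' : t' = t) ▸ hmajority, fun i' hi' l hil hl => ?_⟩
  have := prefCount_le_prefCount hP hSP hi' hil (show l ≤ t from Fin.le_def.2 hl)
  unfold Defeats
  omega

/-- If `C_i` is non-winning with `i ≤ k` (one-indexed, i.e. `(i:ℕ) < k`
zero-indexed) and some winner `C_j` satisfies `j ≥ i + k`, then fewer than `N/2`
voters prefer `C_i` to `C_{i+k}`; consequently neither `C_i` nor any candidate to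
its left majority-defeats any of `C_{i+1}, ..., C_{i+k}`. -/
theorem nonwinner_cannot_defeat_right {m N : ℕ}
    (P : Fin N → Fin m → Fin m → Prop) [∀ v a b, Decidable (P v a b)]
    (hP : StrictPrefs P) (hSP : SinglePeaked P) (hN : Odd N)
    (k : ℕ) (W : Finset (Fin m)) (hW : IsWinningSet P k W)
    (i j : Fin m) (hi : i ∉ W) (hik : (i : ℕ) < k)
    (hj : j ∈ W) (hge : (i : ℕ) + k ≤ (j : ℕ)) :
    (∀ t : Fin m, (t : ℕ) = (i : ℕ) + k → 2 * prefCount P i t < N) ∧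
    (∀ i' : Fin m, i' ≤ i →
      ∀ l : Fin m, i < l → (l : ℕ) ≤ (i : ℕ) + k → ¬ Defeats P i' l) :=
  nonwinner_cannot_defeat_right_general P hP hSP k W hW i j hi hik hj hge
end

section
/- Under single-peaked preferences with an odd number of voters, any set consisting of the top k candidates in the Condorcet ranking (equivalently, any winning set of the multi-winner Copeland method) is both adjacent in the left-right candidate ordering and Gehrlein-stable. -/
open Finset

/-!
Single-peakedness gives two facts about any voter: whoever prefers `a` to `c` also prefers every
candidate strictly between `a` and `c` to `c`, and nobody ranks a candidate below two candidates
flanking it. By the first, in a majority cycle `x → y → z → x` the candidate lying between the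
other two would defeat the one that defeats it, so (with `N` odd) majority defeat is a strict
linear order (Black). Hence a candidate with fewer defeaters defeats one with more, and the top
`k` of the Condorcet ranking defeat everyone outside: the set is Gehrlein-stable. By the second
fact, two candidates never both defeat a candidate between them, so a stable set is an interval.
-/

lemma Set.mem_uIoo_of_pairwise_ne {α : Type*} [LinearOrder α] {x y z : α}
    (hxy : x ≠ y) (hyz : y ≠ z) (hxz : x ≠ z) :
    x ∈ Set.uIoo y z ∨ y ∈ Set.uIoo z x ∨ z ∈ Set.uIoo x y := by
  simp only [Set.uIoo, Set.mem_Ioo, min_lt_iff, lt_max_iff]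
  rcases hxy.lt_or_gt with h₁ | h₁ <;> rcases hyz.lt_or_gt with h₂ | h₂ <;>
    rcases hxz.lt_or_gt with h₃ | h₃ <;> simp [*]

namespace StrictPrefs

variable {m N : ℕ} {P : Fin N → Fin m → Fin m → Prop}

theorem asymm (hP : StrictPrefs P) (v : Fin N) {a b : Fin m} (h : P v a b) : ¬ P v b a :=
  have := hP v; _root_.asymm h

theorem trans (hP : StrictPrefs P) (v : Fin N) {a b c : Fin m} (hab : P v a b)
    (hbc : P v b c) : P v a c :=
  have := hP v; _root_.trans hab hbc

theorem prefers_or_prefers (hP : StrictPrefs P) (v : Fin N) {a b : Fin m} (hab : a ≠ b) :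
    P v a b ∨ P v b a := by
  have := hP v
  rcases trichotomous_of (P v) a b with h | h | h
  exacts [Or.inl h, absurd h hab, Or.inr h]

end StrictPrefs

namespace SinglePeaked

variable {m N : ℕ} {P : Fin N → Fin m → Fin m → Prop}

theorem not_prefers_and_prefers_of_mem_uIoo (hSP : SinglePeaked P) (v : Fin N) {a b j : Fin m}
    (hj : j ∈ Set.uIoo a b) : ¬ (P v a j ∧ P v b j) := by
  rcases le_total a b with hab | hab
  · rw [Set.uIoo_of_le hab] at hj
    exact hSP v a j b hj.1 hj.2
  · rw [Set.uIoo_of_ge hab] at hj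
    exact fun h => hSP v b j a hj.1 hj.2 h.symm

theorem prefers_of_mem_uIoo (hSP : SinglePeaked P) (hP : StrictPrefs P) (v : Fin N)
    {a c j : Fin m} (hj : j ∈ Set.uIoo a c) (hac : P v a c) : P v j c := by
  have hjc : j ≠ c := fun h => Set.right_notMem_uIoo (h ▸ hj)
  refine (hP.prefers_or_prefers v hjc).resolve_right fun hcj => ?_
  exact hSP.not_prefers_and_prefers_of_mem_uIoo v hj ⟨hP.trans v hac hcj, hcj⟩

end SinglePeaked

section Majority

variable {m N : ℕ} {P : Fin N → Fin m → Fin m → Prop} [∀ v a b, Decidable (P v a b)]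

theorem prefCount_le_prefCount_s19 {a b c d : Fin m} (h : ∀ v, P v a b → P v c d) :
    prefCount P a b ≤ prefCount P c d :=
  card_le_card fun v hv => by simp_all

theorem prefCount_add_prefCount_le {a b c d : Fin m} (h : ∀ v, ¬ (P v a b ∧ P v c d)) :
    prefCount P a b + prefCount P c d ≤ N := by
  have hdisj : Disjoint (univ.filter fun v => P v a b) (univ.filter fun v => P v c d) :=
    disjoint_filter.2 fun v _ h₁ h₂ => h v ⟨h₁, h₂⟩
  rw [prefCount, prefCount, ← card_union_of_disjoint hdisj]
  simpa using card_le_univ (filter (fun v => P v a b) univ ∪ filter (fun v => P v c d) univ)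

theorem le_prefCount_add_prefCount {a b c d : Fin m} (h : ∀ v, P v a b ∨ P v c d) :
    N ≤ prefCount P a b + prefCount P c d := by
  calc N = (univ.filter fun v => P v a b ∨ P v c d).card := by simp [h]
    _ ≤ prefCount P a b + prefCount P c d := by rw [filter_or]; exact card_union_le _ _

theorem not_defeats_and_defeats {a b c d : Fin m} (h : ∀ v, ¬ (P v a b ∧ P v c d)) :
    ¬ (Defeats P a b ∧ Defeats P c d) := by
  have := prefCount_add_prefCount_le h
  unfold Defeats
  omega

theorem Defeats.mono {a b c d : Fin m} (h : ∀ v, P v a b → P v c d) (hab : Defeats P a b) :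
    Defeats P c d :=
  lt_of_lt_of_le hab (Nat.mul_le_mul_left 2 (prefCount_le_prefCount_s19 h))

theorem Defeats.not_defeats (hP : StrictPrefs P) {a b : Fin m} (hab : Defeats P a b) :
    ¬ Defeats P b a :=
  fun hba => not_defeats_and_defeats (fun v h => hP.asymm v h.1 h.2) ⟨hab, hba⟩

theorem Defeats.ne (hP : StrictPrefs P) {a b : Fin m} (hab : Defeats P a b) : a ≠ b :=
  fun h => hab.not_defeats hP (h ▸ hab)

theorem defeats_or_defeats (hP : StrictPrefs P) (hN : Odd N) {a b : Fin m} (hab : a ≠ b) :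
    Defeats P a b ∨ Defeats P b a := by
  have := le_prefCount_add_prefCount fun v => hP.prefers_or_prefers v hab
  obtain ⟨t, rfl⟩ := hN
  unfold Defeats
  omega

theorem Defeats.of_mem_uIoo (hP : StrictPrefs P) (hSP : SinglePeaked P) {a c j : Fin m}
    (hj : j ∈ Set.uIoo a c) (hac : Defeats P a c) : Defeats P j c :=
  hac.mono fun v => hSP.prefers_of_mem_uIoo hP v hj

theorem not_defeats_and_defeats_of_mem_uIoo (hSP : SinglePeaked P) {a b c : Fin m}
    (hc : c ∈ Set.uIoo a b) : ¬ (Defeats P a c ∧ Defeats P b c) :=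
  not_defeats_and_defeats fun v => hSP.not_prefers_and_prefers_of_mem_uIoo v hc

theorem Defeats.trans (hP : StrictPrefs P) (hSP : SinglePeaked P) (hN : Odd N)
    {x y z : Fin m} (hxy : Defeats P x y) (hyz : Defeats P y z) : Defeats P x z := by
  have hxz : x ≠ z := fun h => hxy.not_defeats hP (h ▸ hyz)
  refine (defeats_or_defeats hP hN hxz).resolve_right fun hzx => ?_
  rcases Set.mem_uIoo_of_pairwise_ne (hxy.ne hP) (hyz.ne hP) hxz with hx | hy | hz
  · exact (hyz.of_mem_uIoo hP hSP hx).not_defeats hP hzx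
  · exact (hzx.of_mem_uIoo hP hSP hy).not_defeats hP hxy
  · exact (hxy.of_mem_uIoo hP hSP hz).not_defeats hP hyz

end Majority

/-- The Condorcet ranking orders candidates by the size of this set. -/
def defeaters {m N : ℕ} (P : Fin N → Fin m → Fin m → Prop) [∀ v a b, Decidable (P v a b)]
    (a : Fin m) : Finset (Fin m) :=
  univ.filter fun b => Defeats P b a

section Copeland

variable {m N : ℕ} {P : Fin N → Fin m → Fin m → Prop} [∀ v a b, Decidable (P v a b)]

theorem card_defeaters_lt_of_defeats (hP : StrictPrefs P) (hSP : SinglePeaked P) (hN : Odd N)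
    {a b : Fin m} (hab : Defeats P a b) : (defeaters P a).card < (defeaters P b).card := by
  refine card_lt_card ((ssubset_iff_of_subset fun c hc => ?_).2 ⟨a, ?_, ?_⟩)
  · simp only [defeaters, mem_filter, mem_univ, true_and] at hc ⊢
    exact hc.trans hP hSP hN hab
  · simpa [defeaters] using hab
  · simpa [defeaters] using fun h : Defeats P a a => h.ne hP rfl

theorem defeats_of_card_defeaters_lt (hP : StrictPrefs P) (hSP : SinglePeaked P) (hN : Odd N)
    {a b : Fin m} (h : (defeaters P a).card < (defeaters P b).card) : Defeats P a b := by
  have hab : a ≠ b := fun hab => (hab ▸ h).false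
  exact (defeats_or_defeats hP hN hab).resolve_right fun hba =>
    (card_defeaters_lt_of_defeats hP hSP hN hba).not_gt h

end Copeland

/-- The top `k` candidates of the Condorcet ranking (the winning set of
the multi-winner Copeland method) form a set that is both an interval of consecutive
candidates and Gehrlein-stable. -/
theorem copeland_winning_set_adjacent_and_stable {m N : ℕ}
    (P : Fin N → Fin m → Fin m → Prop) [∀ v a b, Decidable (P v a b)]
    (hP : StrictPrefs P) (hSP : SinglePeaked P) (hN : Odd N)
    (k : ℕ) (W : Finset (Fin m))
    (hW : W = univ.filter fun a => (univ.filter fun b => Defeats P b a).card < k) :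
    (∀ a ∈ W, ∀ b ∈ W, ∀ c : Fin m, a ≤ c → c ≤ b → c ∈ W) ∧
    (∀ w ∈ W, ∀ c ∉ W, Defeats P w c) := by
  have stable : ∀ w ∈ W, ∀ c ∉ W, Defeats P w c := by
    intro w hw c hc
    simp only [hW, mem_filter, mem_univ, true_and, not_lt] at hw hc
    exact defeats_of_card_defeaters_lt hP hSP hN (hw.trans_le hc)
  refine ⟨fun a ha b hb c hac hcb => ?_, stable⟩
  by_contra hc
  have hac : a < c := hac.lt_of_ne fun h => hc (h ▸ ha)
  have hcb : c < b := hcb.lt_of_ne fun h => hc (h ▸ hb)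
  exact not_defeats_and_defeats_of_mem_uIoo hSP (Set.mem_uIoo_of_lt hac hcb)
    ⟨stable a ha c hc, stable b hb c hc⟩
end
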